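/- arXiv:2301.05045 — 2 statements merged into one kernel-verified Lean document; each statement's English description precedes it below -/
import Mathlib

section
/- Let Φ be a frame for ℝ^n and T an invertible operator on ℝ^n. Then a dual frame G of TΦ does phase retrieval if and only if T*G (a dual frame of Φ) does phase retrieval; equivalently PD_{TΦ} = (T*)^{-1} PD_Φ. -/
variable {n m : ℕ}

/-- `ψ` is a dual frame of `φ` in `ℝ^n`. -/
def IsDualFrame (φ ψ : Fin m → EuclideanSpace ℝ (Fin n)) : Prop :=
  ∀ f : EuclideanSpace ℝ (Fin n), ∑ i, (inner ℝ (ψ i) f : ℝ) • φ i = f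

/-- Phase retrieval in `ℝ^n`. -/
def DoesPhaseRetrieval (ψ : Fin m → EuclideanSpace ℝ (Fin n)) : Prop :=
  ∀ x y : EuclideanSpace ℝ (Fin n),
    (∀ i, |(inner ℝ x (ψ i) : ℝ)| = |(inner ℝ y (ψ i) : ℝ)|) → x = y ∨ x = -y

open ContinuousLinearMap

theorem IsDualFrame.adjoint_of_comp {T : EuclideanSpace ℝ (Fin n) →L[ℝ] EuclideanSpace ℝ (Fin n)}
    (hT : Function.Injective T) {φ g : Fin m → EuclideanSpace ℝ (Fin n)}
    (hg : IsDualFrame (fun i => T (φ i)) g) :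
    IsDualFrame φ (fun i => adjoint T (g i)) := by
  intro f
  apply hT
  simpa only [map_sum, map_smul, adjoint_inner_left] using hg (T f)

theorem doesPhaseRetrieval_adjoint_iff
    {T : EuclideanSpace ℝ (Fin n) →L[ℝ] EuclideanSpace ℝ (Fin n)}
    (hT : Function.Bijective T) (g : Fin m → EuclideanSpace ℝ (Fin n)) :
    DoesPhaseRetrieval (fun i => adjoint T (g i)) ↔ DoesPhaseRetrieval g := by
  -- `⟨x, T* gᵢ⟩ = ⟨T x, gᵢ⟩`, and `x ↦ T x` is a bijection commuting with negation.
  simp only [DoesPhaseRetrieval, adjoint_inner_right]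
  rw [hT.surjective.forall₂ (p := fun x y =>
    (∀ i, |(inner ℝ x (g i) : ℝ)| = |(inner ℝ y (g i) : ℝ)|) → x = y ∨ x = -y)]
  simp only [← map_neg, hT.injective.eq_iff]

theorem phaseRetrievalDual_of_map_general (φ : Fin m → EuclideanSpace ℝ (Fin n))
    (T : EuclideanSpace ℝ (Fin n) →L[ℝ] EuclideanSpace ℝ (Fin n))
    (hT : IsUnit T) (g : Fin m → EuclideanSpace ℝ (Fin n))
    (hg : IsDualFrame (fun i => T (φ i)) g) :
    IsDualFrame φ (fun i => (ContinuousLinearMap.adjoint T) (g i)) ∧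
      (DoesPhaseRetrieval g ↔
        DoesPhaseRetrieval (fun i => (ContinuousLinearMap.adjoint T) (g i))) := by
  have hbij : Function.Bijective T := T.isUnit_iff_bijective.mp hT
  exact ⟨hg.adjoint_of_comp hbij.injective, (doesPhaseRetrieval_adjoint_iff hbij g).symm⟩

/-- for a frame `φ` of `ℝ^n`, invertible `T` and a dual frame `G`
of `TΦ`, the family `T*G` is a dual frame of `Φ` and `G` does phase retrieval
iff `T*G` does; equivalently `PD_{TΦ} = (T*)⁻¹ PD_Φ`. -/
theorem phaseRetrievalDual_of_map (φ : Fin m → EuclideanSpace ℝ (Fin n))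
    (hframe : Submodule.span ℝ (Set.range φ) = ⊤)
    (T : EuclideanSpace ℝ (Fin n) →L[ℝ] EuclideanSpace ℝ (Fin n))
    (hT : IsUnit T) (g : Fin m → EuclideanSpace ℝ (Fin n))
    (hg : IsDualFrame (fun i => T (φ i)) g) :
    IsDualFrame φ (fun i => (ContinuousLinearMap.adjoint T) (g i)) ∧
      (DoesPhaseRetrieval g ↔
        DoesPhaseRetrieval (fun i => (ContinuousLinearMap.adjoint T) (g i))) :=
  phaseRetrievalDual_of_map_general φ T hT g hg
end

section
/- Let Φ = {φ_1, ..., φ_{2n-1}} be a phase retrieval frame in ℝ^n. Then the set PD_Φ of dual frames of Φ that do phase retrieval is open and dense in the set D_Φ of all dual frames of Φ, with respect to the metric d(G, H) = Σ_{i=1}^{2n-1} ‖g_i - h_i‖. -/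
/-! For `2n - 1` vectors in `ℝⁿ`, phase retrieval is equivalent to full spark (every `n` of the
vectors are linearly independent): by the complement property, for every splitting of the index
set one of the two parts spans, and with `2n - 1` vectors one part always has at least `n`
elements while the other has fewer. Linear independence is an open condition, which gives
openness. For density, the dual frames form an affine space containing the canonical dual
`S⁻¹ φᵢ` (`S` the frame operator), which is full spark because `φ` is. Along the segment from a
given dual `g` towards it, each `n`-subset is linearly dependent only at the roots of its Gram
determinant, a polynomial in the parameter that does not vanish at the far endpoint; so all but
finitely many points of the segment, some arbitrarily close to `g`, are full spark. -/

variable {n m : ℕ}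

open Module Set Filter Topology Submodule Finset
open scoped InnerProductSpace

section LinearAlgebra

variable {ι V : Type*} [AddCommGroup V] [Module ℝ V] {ψ : ι → V}

def FullSpark (ψ : ι → V) : Prop :=
  ∀ s : Finset ι, #s = finrank ℝ V → LinearIndependent ℝ (fun i : s => ψ i)

def ComplementProperty [Fintype ι] [DecidableEq ι] (ψ : ι → V) : Prop :=
  ∀ s : Finset ι, span ℝ (ψ '' s) = ⊤ ∨ span ℝ (ψ '' ↑sᶜ) = ⊤

theorem FullSpark.map_linearEquiv {W : Type*} [AddCommGroup W] [Module ℝ W] (h : FullSpark ψ)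
    (e : V ≃ₗ[ℝ] W) : FullSpark (e ∘ ψ) :=
  fun s hs => (h s (hs.trans e.finrank_eq.symm)).map' e.toLinearMap e.ker

theorem finrank_le_card_of_span_image_eq_top {s : Finset ι} (h : span ℝ (ψ '' s) = ⊤) :
    finrank ℝ V ≤ #s := by
  classical
  rw [← finrank_top ℝ V, ← h, ← Finset.coe_image]
  exact (finrank_span_finset_le_card _).trans card_image_le

theorem FullSpark.span_image_eq_top [FiniteDimensional ℝ V] (h : FullSpark ψ) {s : Finset ι}
    (hs : finrank ℝ V ≤ #s) : span ℝ (ψ '' s) = ⊤ := by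
  obtain ⟨t, hts, ht⟩ := exists_subset_card_eq hs
  have htop : span ℝ (ψ '' t) = ⊤ := by
    rw [image_eq_range]
    exact (h t ht).span_eq_top_of_card_eq_finrank' (by simpa using ht)
  exact top_le_iff.1 (htop ▸ span_mono (image_mono hts))

variable [Fintype ι] [DecidableEq ι]

theorem ComplementProperty.fullSpark (h : ComplementProperty ψ)
    (hcard : Fintype.card ι ≤ 2 * finrank ℝ V - 1) : FullSpark ψ := by
  intro s hs
  rcases h s with hspan | hspan
  · refine linearIndependent_of_top_le_span_of_card_eq_finrank ?_ (by simpa using hs)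
    rw [image_eq_range] at hspan
    exact hspan.ge
  · -- `sᶜ` has fewer than `finrank ℝ V` elements unless `finrank ℝ V = 0`
    have := finrank_le_card_of_span_image_eq_top hspan
    rw [card_compl] at this
    obtain rfl : s = ∅ := card_eq_zero.1 (by omega)
    exact linearIndependent_empty_type

theorem FullSpark.complementProperty [FiniteDimensional ℝ V] (h : FullSpark ψ)
    (hcard : 2 * finrank ℝ V - 1 ≤ Fintype.card ι) : ComplementProperty ψ := by
  intro s
  have : finrank ℝ V ≤ #s ∨ finrank ℝ V ≤ #sᶜ := by
    have := card_le_univ s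
    rw [card_compl]
    omega
  exact this.imp h.span_image_eq_top h.span_image_eq_top

end LinearAlgebra

theorem IsOpen.exists_forall_sum_norm_sub_lt {ι E : Type*} [Fintype ι] [SeminormedAddCommGroup E]
    {U : Set (ι → E)} (hU : IsOpen U) {g : ι → E} (hg : g ∈ U) :
    ∃ ε > 0, ∀ h : ι → E, ∑ i, ‖g i - h i‖ < ε → h ∈ U := by
  obtain ⟨ε, hε, hball⟩ := Metric.isOpen_iff.1 hU g hg
  refine ⟨ε, hε, fun h hh => hball ?_⟩
  rw [Metric.mem_ball, dist_comm, dist_eq_norm]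
  refine lt_of_le_of_lt ((pi_norm_le_iff_of_nonneg (by positivity)).2 fun i => ?_) hh
  exact single_le_sum (f := fun i => ‖g i - h i‖) (fun i _ => norm_nonneg _) (mem_univ i)

section InnerProductSpace

variable {ι E : Type*} [Fintype ι] [NormedAddCommGroup E] [InnerProductSpace ℝ E]

theorem span_eq_top_iff_forall_inner_eq_zero [FiniteDimensional ℝ E] {s : Set E} :
    span ℝ s = ⊤ ↔ ∀ u : E, (∀ v ∈ s, ⟪u, v⟫_ℝ = 0) → u = 0 := by
  rw [← orthogonal_eq_bot_iff, Submodule.eq_bot_iff]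
  refine forall_congr' fun u => imp_congr_left ?_
  rw [← span_singleton_le_iff_mem, ← isOrtho_iff_le, isOrtho_span]
  simp

theorem finite_setOf_not_linearIndependent_add_smul {v w : ι → E}
    (h : LinearIndependent ℝ (v + w)) :
    {t : ℝ | ¬LinearIndependent ℝ (v + t • w)}.Finite := by
  classical
  open Polynomial in
  let p : ℝ[X] := (Matrix.of fun i j => C ⟪v i, v j⟫_ℝ + X * C (⟪v i, w j⟫_ℝ + ⟪w i, v j⟫_ℝ)
    + X ^ 2 * C ⟪w i, w j⟫_ℝ).det
  have hp : ∀ t, p.eval t = (Matrix.gram ℝ (v + t • w)).det := fun t => by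
    rw [← Polynomial.coe_evalRingHom, RingHom.map_det]
    congr 1
    ext i j
    simp [inner_add_left, inner_add_right, inner_smul_left, inner_smul_right]
    ring
  have hp0 : p ≠ 0 := fun h0 => by
    rw [← Matrix.det_gram_ne_zero_iff_linearIndependent, ← one_smul ℝ w, ← hp, h0] at h
    exact h Polynomial.eval_zero
  refine (Polynomial.finite_setOfPred_isRoot hp0).subset fun t ht => ?_
  rwa [mem_ofPred_eq, ← Matrix.det_gram_ne_zero_iff_linearIndependent, not_not, ← hp] at ht

theorem finite_setOf_not_fullSpark_add_smul {g d : ι → E} (h : FullSpark (g + d)) :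
    {t : ℝ | ¬FullSpark (g + t • d)}.Finite := by
  have : {t : ℝ | ¬FullSpark (g + t • d)} = ⋃ (s : Finset ι) (_ : #s = finrank ℝ E),
      {t : ℝ | ¬LinearIndependent ℝ (fun i : s => g i + t • d i)} := by
    ext
    simp [FullSpark]
  rw [this]
  exact finite_iUnion fun s => finite_iUnion fun hs =>
    finite_setOf_not_linearIndependent_add_smul (v := fun i : s => g i) (w := fun i : s => d i)
      (h s hs)

theorem isOpen_setOf_fullSpark [FiniteDimensional ℝ E] : IsOpen {ψ : ι → E | FullSpark ψ} := by
  simp only [FullSpark, ofPred_forall]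
  exact isOpen_iInter_of_finite fun s => isOpen_iInter_of_finite fun _ =>
    isOpen_setOfPred_linearIndependent.preimage (by fun_prop)

end InnerProductSpace

section FrameOperator

variable {ι E : Type*} [Fintype ι] [NormedAddCommGroup E] [InnerProductSpace ℝ E]

noncomputable def frameOperator (φ : ι → E) : E →ₗ[ℝ] E :=
  ∑ i, (innerₗ E (φ i)).smulRight (φ i)

theorem frameOperator_apply (φ : ι → E) (f : E) :
    frameOperator φ f = ∑ i, ⟪φ i, f⟫_ℝ • φ i := by
  simp [frameOperator]

theorem frameOperator_isSymmetric (φ : ι → E) : (frameOperator φ).IsSymmetric := fun f g => by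
  simp only [frameOperator_apply, sum_inner, inner_sum, real_inner_smul_left,
    real_inner_smul_right, real_inner_comm f, mul_comm]

theorem inner_frameOperator_self (φ : ι → E) (f : E) :
    ⟪frameOperator φ f, f⟫_ℝ = ∑ i, ⟪φ i, f⟫_ℝ ^ 2 := by
  simp only [frameOperator_apply, sum_inner, real_inner_smul_left, sq]

variable [FiniteDimensional ℝ E] {φ : ι → E}

theorem frameOperator_injective (hφ : span ℝ (range φ) = ⊤) :
    Function.Injective (frameOperator φ) := by
  rw [← LinearMap.ker_eq_bot, LinearMap.ker_eq_bot']
  intro f hf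
  have hsum : ∑ i, ⟪φ i, f⟫_ℝ ^ 2 = 0 := by rw [← inner_frameOperator_self, hf, inner_zero_left]
  refine span_eq_top_iff_forall_inner_eq_zero.1 hφ f ?_
  rintro _ ⟨i, rfl⟩
  rw [real_inner_comm]
  exact pow_eq_zero_iff two_ne_zero |>.1 <|
    (sum_eq_zero_iff_of_nonneg fun i _ => sq_nonneg _).1 hsum i (mem_univ i)

noncomputable def canonicalDual (φ : ι → E) (hφ : span ℝ (range φ) = ⊤) : ι → E :=
  (LinearEquiv.ofInjectiveEndo _ (frameOperator_injective hφ)).symm ∘ φ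

theorem sum_inner_canonicalDual_smul (hφ : span ℝ (range φ) = ⊤) (f : E) :
    ∑ i, ⟪canonicalDual φ hφ i, f⟫_ℝ • φ i = f := by
  set S := LinearEquiv.ofInjectiveEndo _ (frameOperator_injective hφ)
  have hS : ∀ x, S x = frameOperator φ x := fun _ => rfl
  have hinner : ∀ i, ⟪S.symm (φ i), f⟫_ℝ = ⟪φ i, S.symm f⟫_ℝ := fun i => by
    conv_lhs => rw [← S.apply_symm_apply f, hS]
    rw [← frameOperator_isSymmetric, ← hS, S.apply_symm_apply]
  calc ∑ i, ⟪S.symm (φ i), f⟫_ℝ • φ i = frameOperator φ (S.symm f) := by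
        simp only [hinner, frameOperator_apply]
    _ = f := S.apply_symm_apply f

theorem FullSpark.canonicalDual (hφ : span ℝ (range φ) = ⊤) (h : FullSpark φ) :
    FullSpark (canonicalDual φ hφ) :=
  h.map_linearEquiv _

end FrameOperator

section PhaseRetrieval

variable {ψ : Fin m → EuclideanSpace ℝ (Fin n)}

theorem DoesPhaseRetrieval.complementProperty (h : DoesPhaseRetrieval ψ) :
    ComplementProperty ψ := by
  intro s
  by_contra! hs
  simp only [ne_eq, span_eq_top_iff_forall_inner_eq_zero, Set.forall_mem_image, not_forall] at hs
  obtain ⟨⟨u, hu, hu0⟩, ⟨v, hv, hv0⟩⟩ := hs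
  have habs : ∀ i, |⟪u + v, ψ i⟫_ℝ| = |⟪u - v, ψ i⟫_ℝ| := fun i => by
    by_cases hi : i ∈ s
    · simp [inner_add_left, inner_sub_left, hu hi]
    · simp [inner_add_left, inner_sub_left, hv (by simpa using hi)]
  rcases h _ _ habs with h | h
  · exact hv0 (by linear_combination (norm := module) (1 / 2 : ℝ) • h)
  · exact hu0 (by linear_combination (norm := module) (1 / 2 : ℝ) • h)

theorem ComplementProperty.doesPhaseRetrieval (h : ComplementProperty ψ) :
    DoesPhaseRetrieval ψ := by
  intro x y hxy
  rcases h ({i | ⟪x - y, ψ i⟫_ℝ = 0} : Finset _) with hs | hs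
  · left
    rw [← sub_eq_zero]
    refine span_eq_top_iff_forall_inner_eq_zero.1 hs _ ?_
    simp
  · right
    rw [← add_eq_zero_iff_eq_neg]
    refine span_eq_top_iff_forall_inner_eq_zero.1 hs _ ?_
    rintro _ ⟨i, hi, rfl⟩
    rcases abs_eq_abs.1 (hxy i) with h | h
    · simp [inner_sub_left, h] at hi
    · rw [inner_add_left, h, neg_add_cancel]

theorem doesPhaseRetrieval_iff_complementProperty :
    DoesPhaseRetrieval ψ ↔ ComplementProperty ψ :=
  ⟨DoesPhaseRetrieval.complementProperty, ComplementProperty.doesPhaseRetrieval⟩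

theorem doesPhaseRetrieval_iff_fullSpark {ψ : Fin (2 * n - 1) → EuclideanSpace ℝ (Fin n)} :
    DoesPhaseRetrieval ψ ↔ FullSpark ψ := by
  have hcard : Fintype.card (Fin (2 * n - 1)) = 2 * finrank ℝ (EuclideanSpace ℝ (Fin n)) - 1 := by
    simp
  rw [doesPhaseRetrieval_iff_complementProperty]
  exact ⟨fun h => h.fullSpark hcard.le, fun h => h.complementProperty hcard.ge⟩

end PhaseRetrieval

section DualFrame

variable {φ g g' : Fin m → EuclideanSpace ℝ (Fin n)}

theorem IsDualFrame.add_smul_sub (hg : IsDualFrame φ g) (hg' : IsDualFrame φ g') (t : ℝ) :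
    IsDualFrame φ (g + t • (g' - g)) := by
  intro f
  simp only [Pi.add_apply, Pi.smul_apply, Pi.sub_apply, inner_add_left, real_inner_smul_left,
    inner_sub_left, add_smul, sub_smul, mul_smul, sum_add_distrib, sum_sub_distrib, ← smul_sum,
    hg f, hg' f, sub_self, smul_zero, add_zero]

theorem IsDualFrame.exists_fullSpark_sum_norm_sub_lt (hg : IsDualFrame φ g)
    (hg' : IsDualFrame φ g') (hg'_spark : FullSpark g') {ε : ℝ} (hε : 0 < ε) :
    ∃ h, IsDualFrame φ h ∧ FullSpark h ∧ ∑ i, ‖g i - h i‖ < ε := by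
  have hspark : ∀ᶠ t in 𝓝[≠] (0 : ℝ), FullSpark (g + t • (g' - g)) := by
    have := finite_setOf_not_fullSpark_add_smul (d := g' - g) (by rwa [add_sub_cancel])
    filter_upwards [nhdsNE_le_cofinite 0 this.compl_mem_cofinite] with t ht
    simpa using ht
  have hclose : ∀ᶠ t in 𝓝 (0 : ℝ), ∑ i, ‖t • (g' - g) i‖ < ε :=
    (Continuous.tendsto' (by fun_prop) 0 0 (by simp)).eventually (gt_mem_nhds hε)
  obtain ⟨t, ht_spark, ht_close⟩ := (hspark.and (hclose.filter_mono nhdsWithin_le_nhds)).exists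
  exact ⟨_, hg.add_smul_sub hg' t, ht_spark, by simpa using ht_close⟩

end DualFrame

/-- if `φ = {φ_1, …, φ_{2n-1}}` is a phase retrieval frame of
`ℝ^n`, then the set of phase retrieval dual frames of `φ` is open and dense
in the set of all dual frames of `φ`, for the metric
`d(G,H) = ∑ i ‖g i - h i‖`. -/
theorem phaseRetrievalDuals_open_dense
    (φ : Fin (2 * n - 1) → EuclideanSpace ℝ (Fin n))
    (hframe : Submodule.span ℝ (Set.range φ) = ⊤)
    (hPR : DoesPhaseRetrieval φ) :
    -- openness
    (∀ g : Fin (2 * n - 1) → EuclideanSpace ℝ (Fin n),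
      IsDualFrame φ g → DoesPhaseRetrieval g →
        ∃ ε > 0, ∀ h : Fin (2 * n - 1) → EuclideanSpace ℝ (Fin n),
          IsDualFrame φ h → (∑ i, ‖g i - h i‖) < ε → DoesPhaseRetrieval h) ∧
    -- density
    (∀ g : Fin (2 * n - 1) → EuclideanSpace ℝ (Fin n),
      IsDualFrame φ g → ∀ ε > 0,
        ∃ h : Fin (2 * n - 1) → EuclideanSpace ℝ (Fin n),
          IsDualFrame φ h ∧ DoesPhaseRetrieval h ∧ (∑ i, ‖g i - h i‖) < ε) := by
  refine ⟨fun g _ hg => ?_, fun g hg ε hε => ?_⟩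
  · obtain ⟨ε, hε, hnear⟩ :=
      isOpen_setOf_fullSpark.exists_forall_sum_norm_sub_lt (doesPhaseRetrieval_iff_fullSpark.1 hg)
    exact ⟨ε, hε, fun h _ hh => doesPhaseRetrieval_iff_fullSpark.2 (hnear h hh)⟩
  · have hdual : IsDualFrame φ (canonicalDual φ hframe) := sum_inner_canonicalDual_smul hframe
    obtain ⟨h, hh_dual, hh_spark, hh_near⟩ := hg.exists_fullSpark_sum_norm_sub_lt hdual
      ((doesPhaseRetrieval_iff_fullSpark.1 hPR).canonicalDual hframe) hε
    exact ⟨h, hh_dual, doesPhaseRetrieval_iff_fullSpark.2 hh_spark, hh_near⟩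
end
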